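/- arXiv:2504.03314 — 2 statements merged into one kernel-verified Lean document; each statement's English description precedes it below -/
import Mathlib

section
/- In three dimensions, if u is the zero-energy scattering solution for a nonnegative, compactly supported, spherically symmetric potential v, written as u(x) = 1 - ω(x) with ω(x) = a/|x| outside the support of v, then 8πa = ∫ v(x)u(x) dx, and consequently 8πa ≤ ∫ v(x) dx whenever 0 ≤ u ≤ 1. -/
open MeasureTheory Set

/-! Writing `u(x) = w(|x|)/|x|`, the potential term is a second derivative:
`v w r = 2 w'' r = 2 (w' r - w)'`. Since `v` vanishes beyond `R`, the integral of `v w r` over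
`(0, T)` for any `T > R` is `2 [w' r - w]₀ᵀ = 2 ((T - (T - a)) - 0) = 2a`. The inequality integrates
`0 ≤ v w r ≤ v r²`, which is `0 ≤ u ≤ 1`. -/

theorem integral_deriv_deriv_mul_id {w : ℝ → ℝ} (hw : ContDiff ℝ 2 w) (a b : ℝ) :
    ∫ r in a..b, deriv (deriv w) r * r = (deriv w b * b - w b) - (deriv w a * a - w a) := by
  have hw' : ContDiff ℝ 1 (deriv w) := hw.deriv'
  have hcont : Continuous fun r => deriv (deriv w) r * r :=
    (hw'.continuous_deriv le_rfl).mul continuous_id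
  refine intervalIntegral.integral_eq_sub_of_hasDerivAt (f := fun r => deriv w r * r - w r)
    (fun r _ => ?_) (hcont.intervalIntegrable a b)
  convert ((hw'.differentiable one_ne_zero r).hasDerivAt.fun_mul (hasDerivAt_id' r)).fun_sub
    (hw.differentiable two_ne_zero r).hasDerivAt using 1
  ring

theorem setIntegral_Ioi_eq_intervalIntegral_of_forall_gt_eq_zero {E : Type*}
    [NormedAddCommGroup E] [NormedSpace ℝ E] {f : ℝ → E} {a b : ℝ} (hab : a ≤ b)
    (hf : ∀ x, b < x → f x = 0) : ∫ x in Ioi a, f x = ∫ x in a..b, f x := by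
  rw [intervalIntegral.integral_of_le hab]
  exact setIntegral_eq_of_subset_of_forall_sdiff_eq_zero measurableSet_Ioi Ioc_subset_Ioi_self
    fun x hx => hf x (not_le.mp fun hxb => hx.2 ⟨hx.1, hxb⟩)

theorem integral_mul_mul_id_eq_two_mul_scattering_length {v w : ℝ → ℝ} {R a : ℝ} (hR : 0 ≤ R)
    (hvsupp : ∀ r, R < r → v r = 0) (hw : ContDiff ℝ 2 w) (hw0 : w 0 = 0)
    (hode : ∀ r, 0 < r → deriv (deriv w) r = (1 / 2) * v r * w r)
    (hout : ∀ r, R < r → w r = r - a) :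
    ∫ r in Ioi (0 : ℝ), v r * w r * r = 2 * a := by
  set T := R + 1
  have hRT : R < T := lt_add_one R
  have hwT : w T = T - a := hout T hRT
  have hdwT : deriv w T = 1 := by
    have hw_eq : w =ᶠ[nhds T] fun r => r - a :=
      Filter.eventually_of_mem (Ioi_mem_nhds hRT) hout
    simp [hw_eq.deriv_eq]
  have hvw_eq : ∀ r ∈ uIcc 0 T, v r * w r * r = 2 * (deriv (deriv w) r * r) := by
    intro r hr
    rcases (uIcc_of_le (hR.trans hRT.le) ▸ hr).1.eq_or_lt with rfl | hr0
    · simp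
    · rw [hode r hr0]; ring
  calc ∫ r in Ioi (0 : ℝ), v r * w r * r
      = ∫ r in (0 : ℝ)..T, v r * w r * r :=
        setIntegral_Ioi_eq_intervalIntegral_of_forall_gt_eq_zero (hR.trans hRT.le)
          fun r hr => by simp [hvsupp r (hRT.trans hr)]
    _ = 2 * ∫ r in (0 : ℝ)..T, deriv (deriv w) r * r := by
        rw [intervalIntegral.integral_congr hvw_eq, intervalIntegral.integral_const_mul]
    _ = 2 * a := by rw [integral_deriv_deriv_mul_id hw, hdwT, hwT, hw0]; ring

theorem scattering_length_integral_identity_general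
    (v w : ℝ → ℝ) (R a : ℝ) (hR : 0 < R)
    (hv : ∀ r, 0 ≤ v r) (hvsupp : ∀ r, R < r → v r = 0)
    (hw : ContDiff ℝ 2 w) (hw0 : w 0 = 0)
    (hode : ∀ r, 0 < r → deriv (deriv w) r = (1 / 2) * v r * w r)
    (hout : ∀ r, R < r → w r = r - a)
    (hu : ∀ r, 0 < r → 0 ≤ w r ∧ w r ≤ r)
    (hint2 : IntegrableOn (fun r => v r * r ^ 2) (Set.Ioi (0 : ℝ))) :
    4 * Real.pi * ∫ r in Set.Ioi (0 : ℝ), v r * w r * r = 8 * Real.pi * a ∧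
    8 * Real.pi * a ≤ 4 * Real.pi * ∫ r in Set.Ioi (0 : ℝ), v r * r ^ 2 := by
  have hidentity := integral_mul_mul_id_eq_two_mul_scattering_length hR.le hvsupp hw hw0 hode hout
  have hle : ∫ r in Ioi (0 : ℝ), v r * w r * r ≤ ∫ r in Ioi (0 : ℝ), v r * r ^ 2 := by
    refine integral_mono_of_nonneg ?_ hint2 ?_ <;>
      filter_upwards [ae_restrict_mem measurableSet_Ioi] with r (hr : 0 < r)
    · exact mul_nonneg (mul_nonneg (hv r) (hu r hr).1) hr.le
    · calc v r * w r * r ≤ v r * r * r := by gcongr; exacts [hv r, (hu r hr).2]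
        _ = v r * r ^ 2 := by ring
  rw [hidentity] at hle ⊢
  constructor
  · ring
  · nlinarith [Real.pi_pos]

/-- Radial formulation of the 3D zero-energy scattering problem:
`u(x) = w(|x|)/|x|`, `w'' = (1/2) v w`, `w(r) = r - a` for `r > R`.
Then `∫_{ℝ³} v u = 4π ∫₀^∞ v(r) w(r) r dr = 8πa`, and since `0 ≤ u ≤ 1`
(i.e. `0 ≤ w(r) ≤ r`), also `8πa ≤ ∫_{ℝ³} v = 4π ∫₀^∞ v(r) r² dr`. -/
theorem scattering_length_integral_identity
    (v w : ℝ → ℝ) (R a : ℝ) (hR : 0 < R)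
    (hv : ∀ r, 0 ≤ v r) (hvsupp : ∀ r, R < r → v r = 0)
    (hw : ContDiff ℝ 2 w) (hw0 : w 0 = 0)
    (hode : ∀ r, 0 < r → deriv (deriv w) r = (1 / 2) * v r * w r)
    (hout : ∀ r, R < r → w r = r - a)
    (hu : ∀ r, 0 < r → 0 ≤ w r ∧ w r ≤ r)
    (hint : IntegrableOn (fun r => v r * w r * r) (Set.Ioi (0 : ℝ)))
    (hint2 : IntegrableOn (fun r => v r * r ^ 2) (Set.Ioi (0 : ℝ))) :
    4 * Real.pi * ∫ r in Set.Ioi (0 : ℝ), v r * w r * r = 8 * Real.pi * a ∧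
    8 * Real.pi * a ≤ 4 * Real.pi * ∫ r in Set.Ioi (0 : ℝ), v r * r ^ 2 :=
  scattering_length_integral_identity_general v w R a hR hv hvsupp hw hw0 hode hout hu hint2
end

section
/- The radial zero-energy scattering problem in three dimensions with a nonnegative compactly supported potential has a unique scattering length: if w'' = (1/2) v w on (0,∞), w(0) = 0, and w(r) = c·(r - a) for r > R with c ≠ 0, then a ≤ R. -/
/-! If `a > R`, then `w` is negative just beyond `R` (where `w = c (r - a)`) and positive at
`a + 1`. Let `s ≥ 0` be the last point before that negative value where `w ≥ 0`. From `s` on,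
`w'' = v w / 2 ≤ 0`: inside the support of `v` because `w < 0` there, and outside it because
`v = 0`. So `w` is concave on `[s, a + 1]` and cannot dip below `min (w s) (w (a + 1)) ≥ 0`. -/

open Set

theorem ContinuousOn.exists_last_nonneg {f : ℝ → ℝ} {x y : ℝ} (hf : ContinuousOn f (Icc x y))
    (hxy : x ≤ y) (hx : 0 ≤ f x) :
    ∃ s ∈ Icc x y, 0 ≤ f s ∧ ∀ r ∈ Ioc s y, f r < 0 := by
  have hcompact : IsCompact (Icc x y ∩ f ⁻¹' Ici 0) :=
    isCompact_Icc.of_isClosed_subset (hf.preimage_isClosed_of_isClosed isClosed_Icc isClosed_Ici)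
      inter_subset_left
  obtain ⟨s, ⟨hs, hfs⟩, hgreatest⟩ := hcompact.exists_isGreatest ⟨x, ⟨left_mem_Icc.2 hxy, hx⟩⟩
  refine ⟨s, hs, hfs, fun r hr => ?_⟩
  by_contra! hfr
  exact (hgreatest ⟨⟨hs.1.trans hr.1.le, hr.2⟩, hfr⟩).not_gt hr.1

theorem ContDiff.concaveOn_Icc_of_deriv2_nonpos {f : ℝ → ℝ} (hf : ContDiff ℝ 2 f) {s t : ℝ}
    (hf'' : ∀ x ∈ Ioo s t, deriv (deriv f) x ≤ 0) : ConcaveOn ℝ (Icc s t) f := by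
  have hderiv : ContDiff ℝ 1 (deriv f) := (contDiff_succ_iff_deriv (n := 1).1 hf).2.2
  refine concaveOn_of_deriv2_nonpos (convex_Icc s t) hf.continuous.continuousOn
    (hf.differentiable two_ne_zero).differentiableOn
    (hderiv.differentiable one_ne_zero).differentiableOn fun x hx => ?_
  rw [interior_Icc] at hx
  exact hf'' x hx

theorem scattering_length_le_range_general
    (v w : ℝ → ℝ) (R a c : ℝ) (hR : 0 < R) (hc : 0 < c)
    (hv : ∀ r, 0 < r → 0 ≤ v r)
    (hvsupp : ∀ r, R < r → v r = 0)
    (hw : ContDiff ℝ 2 w) (hw0 : w 0 = 0)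
    (hode : ∀ r, 0 < r → deriv (deriv w) r = (1 / 2) * v r * w r)
    (hout : ∀ r, R < r → w r = c * (r - a)) :
    a ≤ R := by
  by_contra! haR
  obtain ⟨r₁, hRr₁, hr₁a⟩ := exists_between haR
  have hwr₁ : w r₁ < 0 := by rw [hout r₁ hRr₁]; nlinarith
  obtain ⟨s, ⟨hs0, hsr₁⟩, hws, hneg⟩ :=
    hw.continuous.continuousOn.exists_last_nonneg (y := r₁) (by linarith) hw0.ge
  have hconcave : ConcaveOn ℝ (Icc s (a + 1)) w := by
    refine hw.concaveOn_Icc_of_deriv2_nonpos fun x hx => ?_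
    have hx0 : 0 < x := hs0.trans_lt hx.1
    rw [hode x hx0]
    rcases le_or_gt x R with hxR | hxR
    · nlinarith [hv x hx0, hneg x ⟨hx.1, hxR.trans hRr₁.le⟩]
    · simp [hvsupp x hxR]
  have hmin := hconcave.min_le_of_mem_Icc (left_mem_Icc.2 (by linarith))
    (right_mem_Icc.2 (by linarith)) ⟨hsr₁, by linarith⟩
  rw [hout (a + 1) (by linarith), add_sub_cancel_left, mul_one] at hmin
  exact hwr₁.not_ge (le_min hws hc.le |>.trans hmin)

theorem scattering_length_le_range
    (v w : ℝ → ℝ) (R a c : ℝ) (hR : 0 < R) (hc : 0 < c)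
    (hv : ∀ r, 0 < r → 0 ≤ v r) (hvcont : ContinuousOn v (Set.Ioi 0))
    (hvsupp : ∀ r, R < r → v r = 0)
    (hw : ContDiff ℝ 2 w) (hw0 : w 0 = 0) (hwne : ∃ r, w r ≠ 0)
    (hode : ∀ r, 0 < r → deriv (deriv w) r = (1 / 2) * v r * w r)
    (hout : ∀ r, R < r → w r = c * (r - a)) :
    a ≤ R :=
  scattering_length_le_range_general v w R a c hR hc hv hvsupp hw hw0 hode hout
end
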